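/- arXiv:1706.02661 — 3 statements merged into one kernel-verified Lean document; each statement's English description precedes it below -/
import Mathlib

section
/- Let G be a finite simple graph on n vertices. If n − 2 is an eigenvalue of the signless Laplacian matrix Q(G) with multiplicity at least 2 (i.e., (X − (n−2))^2 divides the characteristic polynomial of Q(G)) and the largest eigenvalue of Q(G) is strictly greater than n − 2, then the complement of G is disconnected (equivalently, G is the join of two graphs). -/
open Polynomial Matrix

/-- The Petersen graph: vertices are the 2-element subsets of a 5-element set,
adjacent iff disjoint. -/
def petersen : SimpleGraph {s : Finset (Fin 5) // s.card = 2} where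
  Adj a b := Disjoint a.1 b.1
  symm := ⟨fun _ _ h => h.symm⟩
  loopless := ⟨fun a h => by
    have h2 := a.2
    simp only [disjoint_self, Finset.bot_eq_empty] at h
    simp [h] at h2⟩

instance : DecidableRel petersen.Adj :=
  fun a b => decidable_of_iff (Disjoint a.1 b.1) Iff.rfl

/-- The join of two simple graphs: keep all edges and connect every
vertex of the first graph to every vertex of the second. -/
def SimpleGraph.join {α β : Type*} (G : SimpleGraph α) (H : SimpleGraph β) :
    SimpleGraph (α ⊕ β) where
  Adj u v := match u, v with
    | Sum.inl u, Sum.inl v => G.Adj u v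
    | Sum.inr u, Sum.inr v => H.Adj u v
    | _, _ => True
  symm := ⟨fun u v => match u, v with
    | Sum.inl _, Sum.inl _ => G.adj_symm
    | Sum.inr _, Sum.inr _ => H.adj_symm
    | Sum.inl _, Sum.inr _ | Sum.inr _, Sum.inl _ => fun _ => trivial⟩
  loopless := ⟨fun u => by cases u <;> simp⟩

instance {α β : Type*} (G : SimpleGraph α) (H : SimpleGraph β)
    [DecidableRel G.Adj] [DecidableRel H.Adj] :
    DecidableRel (G.join H).Adj := fun u v =>
  match u, v with
  | Sum.inl u, Sum.inl v => decidable_of_iff (G.Adj u v) Iff.rfl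
  | Sum.inr u, Sum.inr v => decidable_of_iff (H.Adj u v) Iff.rfl
  | Sum.inl _, Sum.inr _ => .isTrue trivial
  | Sum.inr _, Sum.inl _ => .isTrue trivial

/-- The signless Laplacian matrix `Q(G) = D(G) + A(G)` of a graph, over `ℝ`. -/
def signlessLap {V : Type*} [Fintype V] [DecidableEq V] (G : SimpleGraph V)
    [DecidableRel G.Adj] : Matrix V V ℝ :=
  G.degMatrix ℝ + G.adjMatrix ℝ

/-!
Write `n = |V|`. Since `Q(G) + Q(Gᶜ) = (n - 2) I + J`, the matrix `Q(Gᶜ)` acts as `(n - 2) I - Q(G)`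
on vectors with coordinate sum zero. The hypotheses provide three orthonormal eigenvectors of `Q(G)`
with eigenvalues `≥ n - 2`, and some nonzero combination `z` of them has coordinate sum zero and
vanishes at a chosen vertex. Then `zᵀ Q(Gᶜ) z ≤ 0`, so positive semidefiniteness forces
`Q(Gᶜ) z = 0`, i.e. `z i + z j = 0` along every edge of `Gᶜ`. If `Gᶜ` were connected, `z` would
vanish everywhere.
-/

namespace Matrix.IsHermitian

variable {n : Type*} [Fintype n] [DecidableEq n] {A : Matrix n n ℝ} (hA : A.IsHermitian)
include hA

lemma roots_charpoly_eq_map_eigenvalues :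
    A.charpoly.roots = Finset.univ.val.map hA.eigenvalues := by
  simp [hA.roots_charpoly_eq_eigenvalues]

lemma exists_eigenvalues_eq_of_isRoot {x : ℝ} (hx : A.charpoly.IsRoot x) :
    ∃ i, hA.eigenvalues i = x := by
  simpa [hA.roots_charpoly_eq_map_eigenvalues] using
    (mem_roots (Matrix.charpoly_monic A).ne_zero).2 hx

lemma exists_ne_eigenvalues_eq_of_sq_dvd {c : ℝ} (h : (X - C c) ^ 2 ∣ A.charpoly) :
    ∃ i j, i ≠ j ∧ hA.eigenvalues i = c ∧ hA.eigenvalues j = c := by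
  have hmult : 2 ≤ A.charpoly.roots.count c := by
    rw [count_roots]
    exact (le_rootMultiplicity_iff (Matrix.charpoly_monic A).ne_zero).2 h
  rw [hA.roots_charpoly_eq_map_eigenvalues, Multiset.count_map] at hmult
  obtain ⟨i, hi, j, hj, hij⟩ := Finset.one_lt_card.1
    (show 1 < (Finset.univ.filter fun k => c = hA.eigenvalues k).card from hmult)
  simp only [Finset.mem_filter, Finset.mem_univ, true_and] at hi hj
  exact ⟨i, j, hij, hi.symm, hj.symm⟩

lemma three_le_card_eigenvalues_ge {c x : ℝ} (h : (X - C c) ^ 2 ∣ A.charpoly)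
    (hx : A.charpoly.IsRoot x) (hcx : c < x) :
    3 ≤ Fintype.card {k // c ≤ hA.eigenvalues k} := by
  obtain ⟨i, j, hij, hi, hj⟩ := hA.exists_ne_eigenvalues_eq_of_sq_dvd h
  obtain ⟨k, hk⟩ := hA.exists_eigenvalues_eq_of_isRoot hx
  have hik : i ≠ k := fun h => by subst h; linarith
  have hjk : j ≠ k := fun h => by subst h; linarith
  rw [Fintype.card_subtype, ← Finset.card_eq_three.2 ⟨i, j, k, hij, hik, hjk, rfl⟩]
  refine Finset.card_le_card fun l hl => ?_
  simp only [Finset.mem_insert, Finset.mem_singleton] at hl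
  rcases hl with rfl | rfl | rfl <;> simp [*, hcx.le]

lemma eigenvectorBasis_dotProduct (k l : n) :
    ⇑(hA.eigenvectorBasis k) ⬝ᵥ ⇑(hA.eigenvectorBasis l) = if k = l then 1 else 0 := by
  simpa [EuclideanSpace.inner_eq_star_dotProduct, dotProduct_comm] using
    orthonormal_iff_ite.1 hA.eigenvectorBasis.orthonormal k l

end Matrix.IsHermitian

open Finset SimpleGraph

section SignlessLaplacian

variable {V : Type*} [Fintype V] [DecidableEq V] (G : SimpleGraph V) [DecidableRel G.Adj]

lemma isHermitian_signlessLap : (signlessLap G).IsHermitian := by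
  rw [IsHermitian, conjTranspose_eq_transpose_of_trivial]
  exact ((isSymm_degMatrix ℝ G).add G.isSymm_adjMatrix).eq

lemma dotProduct_mulVec_signlessLap (x : V → ℝ) :
    x ⬝ᵥ (signlessLap G *ᵥ x) = (∑ i, ∑ j, if G.Adj i j then (x i + x j) ^ 2 else 0) / 2 := by
  simp_rw [signlessLap, add_mulVec, dotProduct_add, dotProduct_mulVec_degMatrix,
    dotProduct_mulVec_adjMatrix, ← sum_add_distrib, degree_eq_sum_if_adj, sum_mul, ite_mul, one_mul,
    zero_mul, ← sum_add_distrib, ite_add_ite, add_zero]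
  rw [← add_self_div_two (∑ i : V, ∑ j : V, _)]
  conv_lhs => enter [1, 2, 2, i, 2, j]; rw [if_congr (adj_comm G i j) rfl rfl]
  conv_lhs => enter [1, 2]; rw [Finset.sum_comm]
  simp_rw [← sum_add_distrib, ite_add_ite]
  congr 2 with i
  congr 2 with j
  ring_nf

lemma posSemidef_signlessLap : (signlessLap G).PosSemidef := by
  refine .of_dotProduct_mulVec_nonneg (isHermitian_signlessLap G) fun x => ?_
  rw [star_trivial, dotProduct_mulVec_signlessLap]
  positivity

lemma signlessLap_mulVec_eq_zero_iff_forall_adj {x : V → ℝ} :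
    signlessLap G *ᵥ x = 0 ↔ ∀ i j, G.Adj i j → x i + x j = 0 := by
  rw [← (posSemidef_signlessLap G).dotProduct_mulVec_zero_iff, star_trivial,
    dotProduct_mulVec_signlessLap]
  simp (disch := intros; positivity) [sum_eq_zero_iff_of_nonneg]

variable {G}

lemma SimpleGraph.Reachable.eq_zero_of_signlessLap_mulVec_eq_zero {x : V → ℝ}
    (hx : signlessLap G *ᵥ x = 0) {u v : V} (huv : G.Reachable u v) (hu : x u = 0) : x v = 0 := by
  obtain ⟨p⟩ := huv
  induction p with
  | nil => exact hu
  | cons hadj _ ih =>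
    exact ih (by linarith [(signlessLap_mulVec_eq_zero_iff_forall_adj G).1 hx _ _ hadj])

lemma SimpleGraph.Connected.eq_zero_of_signlessLap_mulVec_eq_zero (hG : G.Connected)
    {x : V → ℝ} (hx : signlessLap G *ᵥ x = 0) {v : V} (hv : x v = 0) : x = 0 :=
  funext fun u => (hG v u).eq_zero_of_signlessLap_mulVec_eq_zero hx hv

variable (G)

lemma signlessLap_add_signlessLap_compl :
    signlessLap G + signlessLap Gᶜ = ((Fintype.card V : ℝ) - 2) • 1 + of 1 := by
  have hdeg (v : V) : (G.degree v : ℝ) + Gᶜ.degree v = Fintype.card V - 2 + 1 := by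
    rw [degree_compl, Nat.cast_sub, Nat.cast_sub] <;> [ring; exact Fintype.card_pos_iff.2 ⟨v⟩;
      exact Nat.le_sub_one_of_lt (G.degree_lt_card_verts v)]
  ext i j
  by_cases hij : i = j
  · subst hij
    simp [signlessLap, degMatrix, hdeg]
  · by_cases hadj : G.Adj i j <;> simp [signlessLap, degMatrix, hij, hadj]

end SignlessLaplacian

section OrthonormalFamily

variable {V ι : Type*} [Fintype V] [Fintype ι] [DecidableEq ι] {e : ι → V → ℝ}

lemma dotProduct_sum_smul_of_orthonormal
    (he : ∀ k l, e k ⬝ᵥ e l = if k = l then 1 else 0) (a : ι → ℝ) (l : ι) :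
    e l ⬝ᵥ ∑ k, a k • e k = a l := by
  simp [dotProduct_sum, he]

lemma Matrix.PosSemidef.mulVec_sum_smul_eq_zero [DecidableEq V] {P Q : Matrix V V ℝ} {c : ℝ}
    (hP : P.PosSemidef) (hPQ : Q + P = c • 1 + of 1)
    (he : ∀ k l, e k ⬝ᵥ e l = if k = l then 1 else 0) {μ : ι → ℝ}
    (hQe : ∀ k, Q *ᵥ e k = μ k • e k) (hμ : ∀ k, c ≤ μ k) {a : ι → ℝ}
    (ha : ∑ v, (∑ k, a k • e k) v = 0) :
    P *ᵥ ∑ k, a k • e k = 0 := by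
  set z := ∑ k, a k • e k
  have hPz : P *ᵥ z = ∑ k, (a k * (c - μ k)) • e k := by
    have : P *ᵥ z = c • z + (∑ v, z v) • (fun _ => 1) - Q *ᵥ z := by
      rw [eq_sub_iff_add_eq', ← add_mulVec, hPQ, add_mulVec, smul_mulVec, one_mulVec]
      ext v
      simp [mulVec, dotProduct]
    simp only [this, ha, zero_smul, add_zero, z, mulVec_sum, mulVec_smul, hQe, smul_sum,
      smul_smul, ← sum_sub_distrib, ← sub_smul]
    congr! 2 with k
    ring
  have hquad : z ⬝ᵥ (P *ᵥ z) ≤ 0 := by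
    rw [hPz]
    simp only [z, sum_dotProduct, smul_dotProduct, dotProduct_sum_smul_of_orthonormal he,
      smul_eq_mul]
    exact sum_nonpos fun k _ => by nlinarith [mul_self_nonneg (a k), hμ k]
  rw [← hP.dotProduct_mulVec_zero_iff, star_trivial]
  exact le_antisymm hquad (by simpa using hP.dotProduct_mulVec_nonneg z)

end OrthonormalFamily

lemma exists_ne_zero_sum_smul_sum_eq_zero_apply_eq_zero {V ι : Type*} [Fintype V] [Fintype ι]
    (e : ι → V → ℝ) (hι : 2 < Fintype.card ι) (v₀ : V) :
    ∃ a : ι → ℝ, a ≠ 0 ∧ ∑ v, (∑ k, a k • e k) v = 0 ∧ (∑ k, a k • e k) v₀ = 0 := by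
  have hdep : ¬ LinearIndependent ℝ fun k => (∑ v, e k v, e k v₀) := fun hli => by
    simpa using hli.fintype_card_le_finrank.trans_lt' hι
  obtain ⟨a, ha, k, hk⟩ := Fintype.not_linearIndependent_iff.1 hdep
  simp only [Prod.ext_iff, Prod.fst_sum, Prod.snd_sum, Prod.smul_mk, smul_eq_mul, mul_sum,
    Prod.fst_zero, Prod.snd_zero] at ha
  refine ⟨a, fun h => hk (congrFun h k), ?_, ?_⟩ <;>
    simp only [Finset.sum_apply, Pi.smul_apply, smul_eq_mul]
  · rw [sum_comm]
    exact ha.1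
  · exact ha.2

theorem stmt4 {V : Type} [Fintype V] [DecidableEq V] (G : SimpleGraph V) [DecidableRel G.Adj]
    (h1 : (X - C ((Fintype.card V : ℝ) - 2)) ^ 2 ∣ (signlessLap G).charpoly)
    (h2 : ∃ x : ℝ, (signlessLap G).charpoly.IsRoot x ∧ (Fintype.card V : ℝ) - 2 < x) :
    ¬ (Gᶜ).Connected := by
  intro hconn
  obtain ⟨v₀⟩ := hconn.nonempty
  have hQ := isHermitian_signlessLap G
  obtain ⟨x, hx, hcx⟩ := h2
  let e (k : {k // (Fintype.card V : ℝ) - 2 ≤ hQ.eigenvalues k}) : V → ℝ :=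
    hQ.eigenvectorBasis k
  have he k l : e k ⬝ᵥ e l = if k = l then 1 else 0 := by
    simp [e, hQ.eigenvectorBasis_dotProduct, Subtype.ext_iff]
  obtain ⟨a, ha, hsum, hv₀⟩ := exists_ne_zero_sum_smul_sum_eq_zero_apply_eq_zero e
    (hQ.three_le_card_eigenvalues_ge h1 hx hcx) v₀
  have hker := (posSemidef_signlessLap Gᶜ).mulVec_sum_smul_eq_zero
    (signlessLap_add_signlessLap_compl G) he (fun k => hQ.mulVec_eigenvectorBasis k)
    (fun k => k.2) hsum
  have hzero := hconn.eq_zero_of_signlessLap_mulVec_eq_zero hker hv₀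
  exact ha <| funext fun k => by
    rw [← dotProduct_sum_smul_of_orthonormal he a k, hzero, dotProduct_zero, Pi.zero_apply]
end

section
/- For every natural number w ≥ 1, the characteristic polynomial of the signless Laplacian matrix of the complement of the multicone graph K_w ∇ P equals X^w·(X − 12)·(X − 7)^4·(X − 4)^5; that is, the signless Laplacian spectrum of the complement of K_w ∇ P is {[12]^1, [7]^4, [4]^5, [0]^w}. -/
open Polynomial Matrix

/-! ### Auxiliary lemmas -/

section JoinCompl

variable {α β : Type*} [Fintype α] [Fintype β] [DecidableEq α] [DecidableEq β]
  (G : SimpleGraph α) (H : SimpleGraph β) [DecidableRel G.Adj] [DecidableRel H.Adj]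

lemma join_adj_inl_inl (a b : α) : (G.join H).Adj (Sum.inl a) (Sum.inl b) ↔ G.Adj a b := Iff.rfl
lemma join_adj_inr_inr (a b : β) : (G.join H).Adj (Sum.inr a) (Sum.inr b) ↔ H.Adj a b := Iff.rfl
lemma join_adj_inl_inr (a : α) (b : β) : (G.join H).Adj (Sum.inl a) (Sum.inr b) := trivial
lemma join_adj_inr_inl (a : β) (b : α) : (G.join H).Adj (Sum.inr a) (Sum.inl b) := trivial

lemma neighborFinset_compl_join_inl (a : α) :
    ((G.join H)ᶜ).neighborFinset (Sum.inl a) =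
      (Gᶜ.neighborFinset a).map ⟨Sum.inl, Sum.inl_injective⟩ := by
  ext x
  cases x with
  | inl b =>
    simp [SimpleGraph.mem_neighborFinset, SimpleGraph.compl_adj, join_adj_inl_inl]
  | inr b =>
    simp [SimpleGraph.mem_neighborFinset, SimpleGraph.compl_adj, join_adj_inl_inr]

lemma neighborFinset_compl_join_inr (a : β) :
    ((G.join H)ᶜ).neighborFinset (Sum.inr a) =
      (Hᶜ.neighborFinset a).map ⟨Sum.inr, Sum.inr_injective⟩ := by
  ext x
  cases x with
  | inl b =>
    simp [SimpleGraph.mem_neighborFinset, SimpleGraph.compl_adj, join_adj_inr_inl]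
  | inr b =>
    simp [SimpleGraph.mem_neighborFinset, SimpleGraph.compl_adj, join_adj_inr_inr]

lemma degree_compl_join_inl (a : α) :
    ((G.join H)ᶜ).degree (Sum.inl a) = Gᶜ.degree a := by
  rw [SimpleGraph.degree, neighborFinset_compl_join_inl, Finset.card_map]; rfl

lemma degree_compl_join_inr (a : β) :
    ((G.join H)ᶜ).degree (Sum.inr a) = Hᶜ.degree a := by
  rw [SimpleGraph.degree, neighborFinset_compl_join_inr, Finset.card_map]; rfl

lemma signlessLap_compl_join :
    signlessLap ((G.join H)ᶜ) =
      Matrix.fromBlocks (signlessLap Gᶜ) 0 0 (signlessLap Hᶜ) := by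
  ext u v
  cases u with
  | inl a =>
    cases v with
    | inl b =>
      simp only [signlessLap, SimpleGraph.degMatrix, Matrix.add_apply,
        Matrix.diagonal_apply, SimpleGraph.adjMatrix_apply, Matrix.fromBlocks_apply₁₁,
        degree_compl_join_inl, Sum.inl.injEq]
      congr 1
      by_cases h : (Gᶜ).Adj a b
      · rw [if_pos h, if_pos]
        exact (SimpleGraph.compl_adj _ _ _).2 ⟨by simpa using h.ne, by
          simpa [join_adj_inl_inl] using h.2⟩
      · rw [if_neg h, if_neg]
        intro hc
        rcases (SimpleGraph.compl_adj _ _ _).1 hc with ⟨hne, hna⟩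
        exact h ((SimpleGraph.compl_adj _ _ _).2 ⟨by simpa using hne, by
          simpa [join_adj_inl_inl] using hna⟩)
    | inr b =>
      simp only [signlessLap, SimpleGraph.degMatrix, Matrix.add_apply,
        Matrix.diagonal_apply, SimpleGraph.adjMatrix_apply, Matrix.fromBlocks_apply₁₂]
      rw [if_neg (by simp), if_neg, Matrix.zero_apply, add_zero]
      intro hc
      exact ((SimpleGraph.compl_adj _ _ _).1 hc).2 (join_adj_inl_inr G H a b)
  | inr a =>
    cases v with
    | inl b =>
      simp only [signlessLap, SimpleGraph.degMatrix, Matrix.add_apply,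
        Matrix.diagonal_apply, SimpleGraph.adjMatrix_apply, Matrix.fromBlocks_apply₂₁]
      rw [if_neg (by simp), if_neg, Matrix.zero_apply, add_zero]
      intro hc
      exact ((SimpleGraph.compl_adj _ _ _).1 hc).2 (join_adj_inr_inl G H a b)
    | inr b =>
      simp only [signlessLap, SimpleGraph.degMatrix, Matrix.add_apply,
        Matrix.diagonal_apply, SimpleGraph.adjMatrix_apply, Matrix.fromBlocks_apply₂₂,
        degree_compl_join_inr, Sum.inr.injEq]
      congr 1
      by_cases h : (Hᶜ).Adj a b
      · rw [if_pos h, if_pos]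
        exact (SimpleGraph.compl_adj _ _ _).2 ⟨by simpa using h.ne, by
          simpa [join_adj_inr_inr] using h.2⟩
      · rw [if_neg h, if_neg]
        intro hc
        rcases (SimpleGraph.compl_adj _ _ _).1 hc with ⟨hne, hna⟩
        exact h ((SimpleGraph.compl_adj _ _ _).2 ⟨by simpa using hne, by
          simpa [join_adj_inr_inr] using hna⟩)

end JoinCompl

/-- Conjugation invariance of the characteristic polynomial, with explicit
diagonalization data. -/
lemma charpoly_eq_prod_of_conj {n R : Type*} [Fintype n] [DecidableEq n] [CommRing R]
    [IsDomain R] (B P Q D : Matrix n n R) (d : n → R) (c : R) (hc : c ^ Fintype.card n ≠ 0)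
    (hD : D = Matrix.diagonal d) (hcm : B * P = P * D) (hiv : P * Q = c • 1) :
    B.charpoly = ∏ i, (X - C (d i)) := by
  subst hD
  -- `P.det ≠ 0`
  have hP : P.det ≠ 0 := by
    intro h0
    have hdet := congrArg Matrix.det hiv
    rw [Matrix.det_mul, Matrix.det_smul, Matrix.det_one, h0, zero_mul, mul_one] at hdet
    exact hc hdet.symm
  -- conjugation identity on characteristic matrices
  have h1 : B.map ⇑(C : R →+* R[X]) * P.map ⇑(C : R →+* R[X]) =
      P.map ⇑(C : R →+* R[X]) * (Matrix.diagonal d).map ⇑(C : R →+* R[X]) := by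
    rw [← Matrix.map_mul, ← Matrix.map_mul, hcm]
  have h2 : Commute (Matrix.scalar n (X : R[X])) (P.map ⇑(C : R →+* R[X])) :=
    Matrix.scalar_commute _ (fun r => Commute.all _ _) _
  have key : charmatrix B * P.map ⇑(C : R →+* R[X]) =
      P.map ⇑(C : R →+* R[X]) * charmatrix (Matrix.diagonal d) := by
    simp only [charmatrix, RingHom.mapMatrix_apply, sub_mul, mul_sub, h1, h2.eq]
  have hdet := congrArg Matrix.det key
  have hPC : (P.map ⇑(C : R →+* R[X])).det = C P.det := by
    rw [← RingHom.mapMatrix_apply, ← RingHom.map_det]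
  rw [Matrix.det_mul, Matrix.det_mul, hPC] at hdet
  have hdet' : B.charpoly * C P.det = C P.det * (Matrix.diagonal d).charpoly := hdet
  rw [mul_comm (C P.det)] at hdet'
  have hfin : B.charpoly = (Matrix.diagonal d).charpoly :=
    mul_right_cancel₀ (by simpa using hP) hdet'
  -- charpoly of a diagonal matrix
  have hch : charmatrix (Matrix.diagonal d) =
      Matrix.diagonal (fun i => (X : R[X]) - C (d i)) := by
    ext i j
    by_cases hij : i = j
    · subst hij; simp
    · simp [hij, Matrix.diagonal_apply_ne _ hij]
  rw [hfin, Matrix.charpoly, hch, Matrix.det_diagonal]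

abbrev Vt := {s : Finset (Fin 5) // s.card = 2}

def vl : List (Finset (Fin 5)) := [{0,1},{0,2},{0,3},{0,4},{1,2},{1,3},{1,4},{2,3},{2,4},{3,4}]

lemma idx_lt : ∀ v : Vt, vl.idxOf v.1 < 10 := by decide

lemma card_get : ∀ i : Fin 10, (vl.get (Fin.cast (by rfl) i)).card = 2 := by decide

def eV : Vt ≃ Fin 10 where
  toFun v := ⟨vl.idxOf v.1, idx_lt v⟩
  invFun i := ⟨vl.get (Fin.cast (by rfl) i), card_get i⟩
  left_inv := by decide
  right_inv := by decide

lemma deg6 : ∀ v : Vt, petersenᶜ.degree v = 6 := by decide +kernel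

def B10 : Matrix (Fin 10) (Fin 10) ℤ :=
  !![6, 1, 1, 1, 1, 1, 1, 0, 0, 0;
     1, 6, 1, 1, 1, 0, 0, 1, 1, 0;
     1, 1, 6, 1, 0, 1, 0, 1, 0, 1;
     1, 1, 1, 6, 0, 0, 1, 0, 1, 1;
     1, 1, 0, 0, 6, 1, 1, 1, 1, 0;
     1, 0, 1, 0, 1, 6, 1, 1, 0, 1;
     1, 0, 0, 1, 1, 1, 6, 0, 1, 1;
     0, 1, 1, 0, 1, 1, 0, 6, 1, 1;
     0, 1, 0, 1, 1, 0, 1, 1, 6, 1;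
     0, 0, 1, 1, 0, 1, 1, 1, 1, 6]

def Bq : Matrix Vt Vt ℤ := fun u v =>
  (if u = v then 6 else 0) + (if petersenᶜ.Adj u v then 1 else 0)

def P10 : Matrix (Fin 10) (Fin 10) ℤ :=
  !![1, 1, 1, 0, 0, 0, 0, 1, 1, 1;
     1, 1, 0, 1, 0, 1, 1, 0, 0, 1;
     1, 1, 0, 0, 1, -1, 0, -1, 0, -1;
     1, 0, -1, -1, -1, 0, -1, 0, -1, -1;
     1, 0, 1, 1, 0, -1, -1, -1, -1, -1;
     1, 0, 1, 0, 1, 1, 0, 0, 0, 0;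
     1, -1, 0, -1, -1, 0, 1, 0, 0, 0;
     1, 0, 0, 1, 1, 0, 0, 1, 0, 0;
     1, -1, -1, 0, -1, 0, 0, 0, 1, 0;
     1, -1, -1, -1, 0, 0, 0, 0, 0, 1]

def Q10 : Matrix (Fin 10) (Fin 10) ℤ :=
  !![3, 3, 3, 3, 3, 3, 3, 3, 3, 3;
     6, 6, 6, 6, -4, -4, -4, -4, -4, -4;
     6, -4, -4, -4, 6, 6, 6, -4, -4, -4;
     -4, 6, -4, -4, 6, -4, -4, 6, 6, -4;
     -4, -4, 6, -4, -4, 6, -4, 6, -4, 6;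
     -5, 5, -5, 5, -5, 15, -5, -5, 5, -5;
     -5, 5, 5, -5, -5, -5, 15, 5, -5, -5;
     5, -5, -5, 5, -5, -5, 5, 15, -5, -5;
     5, -5, 5, -5, -5, 5, -5, -5, 15, -5;
     5, 5, -5, -5, 5, -5, -5, -5, -5, 15]

def d10 : Fin 10 → ℤ := ![12, 7, 7, 7, 7, 4, 4, 4, 4, 4]

def Dm : Matrix (Fin 10) (Fin 10) ℤ := Matrix.diagonal d10

set_option maxRecDepth 10000 in
lemma hreindex : Matrix.reindex eV eV Bq = B10 := by decide +kernel

set_option maxRecDepth 10000 in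
lemma hcomm : B10 * P10 = P10 * Dm := by decide

set_option maxRecDepth 10000 in
lemma hinv : P10 * Q10 = (30 : ℤ) • 1 := by decide

lemma charpoly_B10 : B10.charpoly = (X - C 12) * (X - C 7) ^ 4 * (X - C 4) ^ 5 := by
  have h := charpoly_eq_prod_of_conj B10 P10 Q10 Dm d10 30 (by positivity) rfl hcomm hinv
  rw [h]
  simp only [d10, Fin.prod_univ_succ, Finset.univ_unique, Fin.default_eq_zero,
    Finset.prod_singleton, Matrix.cons_val_zero, Matrix.cons_val_succ]
  ring

lemma hBmap : signlessLap petersenᶜ = Bq.map ⇑(Int.castRingHom ℝ) := by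
  ext u v
  simp only [signlessLap, SimpleGraph.degMatrix, Matrix.add_apply, Matrix.diagonal_apply,
    SimpleGraph.adjMatrix_apply, Matrix.map_apply, Bq, deg6]
  split_ifs <;> norm_num

lemma charpoly_petersen_compl :
    (signlessLap petersenᶜ).charpoly = (X - C 12) * (X - C 7) ^ 4 * (X - C 4) ^ 5 := by
  rw [hBmap, Matrix.charpoly_map]
  have hq : Bq.charpoly = (X - C 12) * (X - C 7) ^ 4 * (X - C 4) ^ 5 := by
    rw [← Matrix.charpoly_reindex eV Bq, hreindex, charpoly_B10]
  rw [hq]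
  simp only [Polynomial.map_mul, Polynomial.map_pow, Polynomial.map_sub, Polynomial.map_X,
    Polynomial.map_C]
  norm_num

lemma signlessLap_top_compl (w : ℕ) : signlessLap (⊤ : SimpleGraph (Fin w))ᶜ = 0 := by
  have hadj : ∀ x y : Fin w, ¬ (⊤ : SimpleGraph (Fin w))ᶜ.Adj x y := by
    intro x y hc
    rcases (SimpleGraph.compl_adj _ _ _).1 hc with ⟨hne, hna⟩
    exact hna hne
  have hdeg : ∀ x : Fin w, (⊤ : SimpleGraph (Fin w))ᶜ.degree x = 0 := by
    intro x
    rw [SimpleGraph.degree, Finset.card_eq_zero]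
    ext y
    simp only [SimpleGraph.mem_neighborFinset, Finset.notMem_empty, iff_false]
    exact hadj x y
  ext a b
  simp [signlessLap, SimpleGraph.degMatrix, Matrix.diagonal_apply, hadj, hdeg]

lemma charpoly_zero_matrix (w : ℕ) : (0 : Matrix (Fin w) (Fin w) ℝ).charpoly = X ^ w := by
  have h : charmatrix (0 : Matrix (Fin w) (Fin w) ℝ) =
      Matrix.diagonal (fun _ => (X : ℝ[X])) := by
    ext i j
    by_cases hij : i = j
    · subst hij; simp
    · simp [hij, Matrix.diagonal_apply_ne _ hij]
  rw [Matrix.charpoly, h, Matrix.det_diagonal]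
  simp

theorem stmt6 (w : ℕ) (hw : 1 ≤ w) :
    (signlessLap (((⊤ : SimpleGraph (Fin w)).join petersen)ᶜ)).charpoly =
      X ^ w * (X - C 12) * (X - C 7) ^ 4 * (X - C 4) ^ 5 := by
  rw [signlessLap_compl_join, Matrix.charpoly_fromBlocks_zero₂₁,
    signlessLap_top_compl, charpoly_zero_matrix, charpoly_petersen_compl]
  ring
end

section
/- The disjoint union of two triangles K_3 ⊔ K_3 has signless Laplacian characteristic polynomial (X − 4)^2·(X − 1)^4 (so its largest signless Laplacian eigenvalue equals n − 2 = 4 with multiplicity 2), yet its complement is connected; hence the hypothesis q_1(G) > n − 2 cannot be dropped from the join criterion. -/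
/-!
Taking the triangles' vertex sets as the two sides, `Q(K₃ ⊔ K₃)` is block diagonal with two copies
of `Q(K₃) = I + J`, whose characteristic polynomial is `(X - 4)(X - 1)²`. In the complement every
vertex of one triangle is adjacent to every vertex of the other, so the complement is connected.
-/

open Polynomial Matrix

instance {α β : Type*} (G : SimpleGraph α) (H : SimpleGraph β)
    [DecidableRel G.Adj] [DecidableRel H.Adj] :
    DecidableRel (G ⊕g H).Adj := fun u v =>
  match u, v with
  | Sum.inl u, Sum.inl v => decidable_of_iff (G.Adj u v) Iff.rfl
  | Sum.inr u, Sum.inr v => decidable_of_iff (H.Adj u v) Iff.rfl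
  | Sum.inl _, Sum.inr _ => .isFalse (by simp)
  | Sum.inr _, Sum.inl _ => .isFalse (by simp)

namespace SimpleGraph

variable {α β : Type*} (G : SimpleGraph α) (H : SimpleGraph β)

section Sum

variable [Fintype α] [Fintype β] [DecidableRel G.Adj] [DecidableRel H.Adj]

lemma degree_sum_inl (v : α) : (G ⊕g H).degree (.inl v) = G.degree v := by
  unfold degree
  rw [show (G ⊕g H).neighborFinset (.inl v) = (G.neighborFinset v).map .inl by
    ext (w | w) <;> simp]
  exact Finset.card_map _

lemma degree_sum_inr (w : β) : (G ⊕g H).degree (.inr w) = H.degree w := by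
  unfold degree
  rw [show (G ⊕g H).neighborFinset (.inr w) = (H.neighborFinset w).map .inr by
    ext (v | v) <;> simp]
  exact Finset.card_map _

variable [DecidableEq α] [DecidableEq β]

lemma signlessLap_sum :
    signlessLap (G ⊕g H) = fromBlocks (signlessLap G) 0 0 (signlessLap H) := by
  ext (v | w) (v' | w') <;>
    simp [signlessLap, degMatrix, diagonal, degree_sum_inl, degree_sum_inr]

lemma charpoly_signlessLap_sum :
    (signlessLap (G ⊕g H)).charpoly = (signlessLap G).charpoly * (signlessLap H).charpoly := by
  rw [signlessLap_sum, charpoly_fromBlocks_zero₂₁]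

end Sum

lemma signlessLap_top_fin_three :
    signlessLap (⊤ : SimpleGraph (Fin 3)) = !![2, 1, 1; 1, 2, 1; 1, 1, 2] := by
  ext i j
  fin_cases i <;> fin_cases j <;> simp [signlessLap, degMatrix]

lemma charpoly_signlessLap_top_fin_three :
    (signlessLap (⊤ : SimpleGraph (Fin 3))).charpoly = (X - C 4) * (X - C 1) ^ 2 := by
  rw [signlessLap_top_fin_three, charpoly, det_fin_three]
  simp [map_ofNat]
  ring

lemma compl_sum_adj_inl_inr (v : α) (w : β) : (G ⊕g H)ᶜ.Adj (.inl v) (.inr w) := by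
  simp

lemma compl_sum_connected [Nonempty α] [Nonempty β] : (G ⊕g H)ᶜ.Connected := by
  have cross (v : α) (w : β) : (G ⊕g H)ᶜ.Reachable (.inl v) (.inr w) :=
    (compl_sum_adj_inl_inr G H v w).reachable
  obtain ⟨v₀⟩ := ‹Nonempty α›
  obtain ⟨w₀⟩ := ‹Nonempty β›
  refine Connected.mk ?_
  rintro (v | w) (v' | w')
  · exact (cross v w₀).trans (cross v' w₀).symm
  · exact cross v w'
  · exact (cross v' w).symm
  · exact (cross v₀ w).symm.trans (cross v₀ w')

end SimpleGraph

open SimpleGraph in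
theorem stmt18 :
    (signlessLap ((⊤ : SimpleGraph (Fin 3)) ⊕g (⊤ : SimpleGraph (Fin 3)))).charpoly =
      (X - C 4) ^ 2 * (X - C 1) ^ 4 ∧
    (((⊤ : SimpleGraph (Fin 3)) ⊕g (⊤ : SimpleGraph (Fin 3)))ᶜ).Connected := by
  refine ⟨?_, compl_sum_connected _ _⟩
  rw [charpoly_signlessLap_sum, charpoly_signlessLap_top_fin_three]
  ring
end
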